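/- For every n ≥ 1 and every nonzero w ∈ H_h, (Ā_N w, w)_h < (3/2)(Σᵢ aᵢ²λ_max^{(i)}) (s̄_N w, w)_h, where λ_max^{(i)} = (4/hᵢ²) sin²(π(Nᵢ−1)/(2Nᵢ)); consequently Ā_N ≤ α_h² s̄_N as symmetric operators with a constant α_h² < 6 Σᵢ aᵢ²/hᵢ². -/

import Mathlib

open Real

/-- Second difference in direction `i` (step `h i`) on mesh functions. -/
noncomputable def dLam {n : ℕ} (h : Fin n → ℝ) (i : Fin n)
    (w : (Fin n → ℕ) → ℝ) : (Fin n → ℕ) → ℝ :=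
  fun k => (w (Function.update k i (k i + 1)) - 2 * w k
    + w (Function.update k i (k i - 1))) / (h i)^2

/-- The one-dimensional compact average s_{iN} = I + (1/12)hᵢ²Λᵢ. -/
noncomputable def dS {n : ℕ} (h : Fin n → ℝ) (i : Fin n)
    (w : (Fin n → ℕ) → ℝ) : (Fin n → ℕ) → ℝ :=
  fun k => w k + (1/12) * (h i)^2 * dLam h i w k

/-- The splitting average s̄_N = ∏ᵢ s_{iN} (composition over all directions;
the factors commute). -/
noncomputable def dSbar {n : ℕ} (h : Fin n → ℝ)
    (w : (Fin n → ℕ) → ℝ) : (Fin n → ℕ) → ℝ :=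
  ((List.finRange n).map (fun i => dS h i)).foldr (fun g acc => g ∘ acc) id w

/-- The operator s̄_{N î} = ∏_{j ≠ i} s_{jN}. -/
noncomputable def dSbarHat {n : ℕ} (h : Fin n → ℝ) (i : Fin n)
    (w : (Fin n → ℕ) → ℝ) : (Fin n → ℕ) → ℝ :=
  (((List.finRange n).filter (fun j => j != i)).map (fun j => dS h j)).foldr
    (fun g acc => g ∘ acc) id w

/-- The operator Ā_N = −Σᵢ aᵢ² s̄_{N î} Λᵢ. -/
noncomputable def dAbar {n : ℕ} (a h : Fin n → ℝ)
    (w : (Fin n → ℕ) → ℝ) : (Fin n → ℕ) → ℝ :=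
  fun k => -∑ i, (a i)^2 * dSbarHat h i (dLam h i w) k

/-- The compact average s_N = I + (1/12)Σᵢ hᵢ²Λᵢ. -/
noncomputable def dSN {n : ℕ} (h : Fin n → ℝ)
    (w : (Fin n → ℕ) → ℝ) : (Fin n → ℕ) → ℝ :=
  fun k => w k + (1/12) * ∑ i, (h i)^2 * dLam h i w k

/-- Interior mesh nodes: 1 ≤ kᵢ ≤ Nᵢ − 1 for all i. -/
def interiorNode {n : ℕ} (N : Fin n → ℕ) (k : Fin n → ℕ) : Prop :=
  ∀ i, 1 ≤ k i ∧ k i ≤ N i - 1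

/-- The finite set of interior mesh nodes. -/
def interiorFinset {n : ℕ} (N : Fin n → ℕ) : Finset (Fin n → ℕ) :=
  Fintype.piFinset (fun i => Finset.Icc 1 (N i - 1))

/-- The inner product (v,w)_h = h₁⋯h_n Σ_{interior} v w on mesh functions. -/
noncomputable def dInner {n : ℕ} (N : Fin n → ℕ) (h : Fin n → ℝ)
    (v w : (Fin n → ℕ) → ℝ) : ℝ :=
  (∏ i, h i) * ∑ k ∈ interiorFinset N, v k * w k

/-- for every n ≥ 1 and every nonzero w ∈ H_h,
(Ā_N w, w)_h < (3/2)(Σᵢ aᵢ²λ_max^{(i)})(s̄_N w, w)_h with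
λ_max^{(i)} = (4/hᵢ²)sin²(π(Nᵢ−1)/(2Nᵢ)); consequently Ā_N ≤ α_h² s̄_N for some constant
α_h² < 6 Σᵢ aᵢ²/hᵢ².  Membership in H_h is expressed by vanishing off the interior nodes. -/
lemma cos_sum_pos (M : ℕ) (r : ℕ) (hr0 : 0 < r) (hr : r < 2*M) :
    ∑ k ∈ Finset.range M, Real.cos (π * r * k / M) = if Even r then 0 else 1 := by
  have hM : 0 < M := by omega
  have hMR : (0:ℝ) < M := by exact_mod_cast hM
  have hMne : (M:ℂ) ≠ 0 := by exact_mod_cast hMR.ne'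
  set z : ℂ := Complex.exp ((π * r / M : ℝ) * Complex.I) with hz
  have hzk : ∀ k : ℕ, z ^ k = Complex.exp ((π * r * k / M : ℝ) * Complex.I) := by
    intro k
    rw [← Complex.exp_nat_mul]
    congr 1
    push_cast
    field_simp
  have hzM : z ^ M = (-1 : ℂ) ^ r := by
    rw [← Complex.exp_nat_mul]
    have h1 : (M:ℂ) * (((π * r / M : ℝ) : ℂ) * Complex.I) = (r:ℕ) * (π * Complex.I) := by
      push_cast
      field_simp
    rw [h1, Complex.exp_nat_mul, Complex.exp_pi_mul_I]
  have hz1 : z ≠ 1 := by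
    intro hzone
    rw [hz, Complex.exp_eq_one_iff] at hzone
    obtain ⟨m, hm⟩ := hzone
    have hI : (Complex.I : ℂ) ≠ 0 := Complex.I_ne_zero
    have hc : ((π * r / M : ℝ) : ℂ) = (m : ℂ) * (2 * π) := by
      apply mul_right_cancel₀ hI
      rw [hm]; ring
    have hreal : (π * r / M : ℝ) = (m:ℝ) * (2 * π) := by exact_mod_cast hc
    have hπ : (0:ℝ) < π := Real.pi_pos
    have hrr : (r : ℝ) = (m:ℝ) * (2 * M) := by
      field_simp at hreal
      nlinarith [hreal]
    have h1 : (0:ℝ) < (r:ℝ) := by exact_mod_cast hr0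
    have h2 : (r:ℝ) < 2*M := by exact_mod_cast hr
    rcases le_or_gt (m:ℝ) 0 with hm0 | hm0
    · nlinarith
    · have hm1 : (1:ℝ) ≤ (m:ℝ) := by exact_mod_cast hm0
      nlinarith
  have hz10 : z - 1 ≠ 0 := sub_ne_zero.mpr hz1
  have hgeom : (∑ k ∈ Finset.range M, z ^ k) * (z - 1) = z ^ M - 1 := geom_sum_mul z M
  have hre : ∑ k ∈ Finset.range M, Real.cos (π * r * k / M)
      = (∑ k ∈ Finset.range M, z ^ k).re := by
    rw [Complex.re_sum]
    refine Finset.sum_congr rfl fun k _ => ?_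
    rw [hzk k, Complex.exp_ofReal_mul_I_re]
  by_cases hev : Even r
  · have hzM1 : z ^ M = 1 := by rw [hzM, hev.neg_one_pow]
    have hS : (∑ k ∈ Finset.range M, z ^ k) = 0 := by
      have h0 : (∑ k ∈ Finset.range M, z ^ k) * (z - 1) = 0 := by rw [hgeom, hzM1, sub_self]
      exact (mul_eq_zero.mp h0).resolve_right hz10
    simp [hev, hre, hS]
  · -- odd case
    have hzM1 : z ^ M = -1 := by rw [hzM, (Nat.not_even_iff_odd.mp hev).neg_one_pow]
    set S := ∑ k ∈ Finset.range M, z ^ k with hSdef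
    have hS : S * (z - 1) = -2 := by rw [hSdef, hgeom, hzM1]; ring
    have hz0 : z ≠ 0 := Complex.exp_ne_zero _
    have hconjz : (starRingEnd ℂ) z = z⁻¹ := by
      rw [hz, ← Complex.exp_conj, ← Complex.exp_neg]
      congr 1
      simp [Complex.conj_ofReal]
    have hconjS : (starRingEnd ℂ) S * (z⁻¹ - 1) = -2 := by
      have h1 : (starRingEnd ℂ) S = ∑ k ∈ Finset.range M, (z⁻¹) ^ k := by
        rw [hSdef, map_sum]
        exact Finset.sum_congr rfl fun k _ => by rw [map_pow, hconjz]
      rw [h1, geom_sum_mul, inv_pow, hzM1]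
      norm_num
    have hinv1 : z⁻¹ - 1 ≠ 0 := by
      rw [sub_ne_zero]
      intro hc
      exact hz1 (by rw [← inv_inv z, hc, inv_one])
    have hzinv : z * z⁻¹ = 1 := mul_inv_cancel₀ hz0
    have hkey : S + (starRingEnd ℂ) S = 2 := by
      have hmul : (S + (starRingEnd ℂ) S - 2) * ((z - 1) * (z⁻¹ - 1)) = 0 := by
        linear_combination (z⁻¹ - 1) * hS + (z - 1) * hconjS - 2 * hzinv
      have := mul_eq_zero.mp hmul
      rcases this with h0 | h0
      · linear_combination h0
      · exact absurd h0 (mul_ne_zero hz10 hinv1)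
    have hc2 : ((2 * S.re : ℝ) : ℂ) = 2 := by rw [← Complex.add_conj]; exact hkey
    have h2 : 2 * S.re = 2 := by exact_mod_cast hc2
    have hre1 : S.re = 1 := by linarith
    simp [hev, hre, ← hSdef, hre1]

lemma sin_prod_sum (x y : ℝ) : Real.sin x * Real.sin y = (Real.cos (x-y) - Real.cos (x+y))/2 := by
  have h1 := Real.cos_sub x y
  have h2 := Real.cos_add x y
  linarith

lemma sin_ortho (M a b : ℕ) (hM : 2 ≤ M) (ha : 1 ≤ a) (ha' : a ≤ M - 1)
    (hb : 1 ≤ b) (hb' : b ≤ M - 1) :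
    ∑ k ∈ Finset.Icc 1 (M-1), Real.sin (π*a*k/M) * Real.sin (π*b*k/M)
      = if a = b then (M:ℝ)/2 else 0 := by
  have hM0 : 0 < M := by omega
  -- convert to range M
  have hicc : Finset.Icc 1 (M-1) = Finset.Ico 1 M := by
    ext k; simp [Finset.mem_Icc, Finset.mem_Ico]; omega
  have hext : ∑ k ∈ Finset.range M, Real.sin (π*a*k/M) * Real.sin (π*b*k/M)
      = ∑ k ∈ Finset.Icc 1 (M-1), Real.sin (π*a*k/M) * Real.sin (π*b*k/M) := by
    rw [hicc, Finset.range_eq_Ico, Finset.sum_eq_sum_Ico_succ_bot hM0]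
    norm_num
  rw [← hext]
  -- product to sum
  have hsplit : ∀ k : ℕ, Real.sin (π*a*k/M) * Real.sin (π*b*k/M)
      = (Real.cos (π*a*k/M - π*b*k/M) - Real.cos (π*a*k/M + π*b*k/M))/2 := fun k => sin_prod_sum _ _
  simp only [hsplit]
  rw [← Finset.sum_div, Finset.sum_sub_distrib]
  have hplus : ∀ k:ℕ, (π*a*k/M + π*b*k/M) = π*((a+b : ℕ):ℝ)*k/M := by
    intro k; push_cast; ring
  rcases eq_or_ne a b with hab | hab
  · subst hab
    have h2a := cos_sum_pos M (a+a) (by omega) (by omega)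
    have hev : Even (a+a) := ⟨a, rfl⟩
    rw [if_pos hev] at h2a
    simp only [sub_self, Real.cos_zero, hplus, h2a]
    simp
  · rw [if_neg hab]
    rcases le_total b a with hba | hba
    · have hd1 : 1 ≤ a - b := by omega
      have hminus : ∀ k:ℕ, (π*a*k/M - π*b*k/M) = π*((a-b : ℕ):ℝ)*k/M := by
        intro k; rw [Nat.cast_sub hba]; ring
      have t1 := cos_sum_pos M (a-b) (by omega) (by omega)
      have t2 := cos_sum_pos M (a+b) (by omega) (by omega)
      have hevv : Even (a-b) ↔ Even (a+b) := by
        rw [Nat.even_sub hba, Nat.even_add]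
      simp only [hminus, hplus, t1, t2]
      by_cases he : Even (a-b)
      · rw [if_pos he, if_pos (hevv.mp he)]; ring
      · rw [if_neg he, if_neg (fun hc => he (hevv.mpr hc))]; ring
    · have hd1 : 1 ≤ b - a := by omega
      have hminus : ∀ k:ℕ, (π*a*k/M - π*b*k/M) = -(π*((b-a : ℕ):ℝ)*k/M) := by
        intro k; rw [Nat.cast_sub hba]; ring
      have t1 := cos_sum_pos M (b-a) (by omega) (by omega)
      have t2 := cos_sum_pos M (a+b) (by omega) (by omega)
      have hevv : Even (b-a) ↔ Even (a+b) := by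
        rw [Nat.even_sub hba, Nat.even_add]
        tauto
      simp only [hminus, hplus, Real.cos_neg, t1, t2]
      by_cases he : Even (b-a)
      · rw [if_pos he, if_pos (hevv.mp he)]; ring
      · rw [if_neg he, if_neg (fun hc => he (hevv.mpr hc))]; ring

/-- sin²(πc/(2M)) -/
noncomputable def s2 (M c : ℕ) : ℝ := Real.sin (π * c / (2*M))^2

/-- eigenvalue of s_{iN}: 1 - (1/3) sin²(πc/(2M)) -/
noncomputable def mu1 (M c : ℕ) : ℝ := 1 - s2 M c / 3

noncomputable def esin {n : ℕ} (N : Fin n → ℕ) (m k : Fin n → ℕ) : ℝ :=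
  ∏ i, Real.sin (π * m i * k i / N i)

lemma sin_second_diff (M c kk : ℕ) :
    Real.sin (π*c*((kk:ℝ)+1)/M) - 2*Real.sin (π*c*kk/M) + Real.sin (π*c*((kk:ℝ)-1)/M)
      = -(4 * s2 M c) * Real.sin (π*c*kk/M) := by
  have hθ : (π*(c:ℝ)/(2*M)) = (π*c/M)/2 := by ring
  have hcos : Real.cos (π*(c:ℝ)/M) = 1 - 2 * s2 M c := by
    have hpy := Real.sin_sq_add_cos_sq (π*(c:ℝ)/(2*M))
    have hch := Real.cos_sq (π*(c:ℝ)/(2*M))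
    have harg : 2*(π*(c:ℝ)/(2*M)) = π*(c:ℝ)/M := by ring
    rw [harg] at hch
    rw [s2]
    linarith
  have h1 : π*(c:ℝ)*((kk:ℝ)+1)/M = π*c*kk/M + π*c/M := by ring
  have h2 : π*(c:ℝ)*((kk:ℝ)-1)/M = π*c*kk/M - π*c/M := by ring
  rw [h1, h2, Real.sin_add, Real.sin_sub]
  linear_combination (2*Real.sin (π*(c:ℝ)*kk/M)) * hcos

lemma esin_update {n : ℕ} (N : Fin n → ℕ) (m k : Fin n → ℕ) (j : Fin n) (v : ℕ) :
    esin N m (Function.update k j v)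
      = Real.sin (π * m j * v / N j) * ∏ i ∈ Finset.univ.erase j, Real.sin (π * m i * k i / N i) := by
  rw [esin, ← Finset.mul_prod_erase _ _ (Finset.mem_univ j)]
  congr 1
  · simp
  · refine Finset.prod_congr rfl fun i hi => ?_
    rw [Function.update_of_ne (Finset.ne_of_mem_erase hi)]

lemma esin_second_diff {n : ℕ} (N : Fin n → ℕ) (m k : Fin n → ℕ) (j : Fin n)
    (hk : 1 ≤ k j) :
    esin N m (Function.update k j (k j + 1)) - 2 * esin N m k
      + esin N m (Function.update k j (k j - 1))
      = -(4 * s2 (N j) (m j)) * esin N m k := by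
  have hself : esin N m k = Real.sin (π * m j * k j / N j)
      * ∏ i ∈ Finset.univ.erase j, Real.sin (π * m i * k i / N i) := by
    have := esin_update N m k j (k j)
    rwa [Function.update_eq_self] at this
  rw [esin_update, esin_update, hself]
  have c1 : ((k j + 1 : ℕ) : ℝ) = (k j : ℝ) + 1 := by push_cast; ring
  have c2 : ((k j - 1 : ℕ) : ℝ) = (k j : ℝ) - 1 := by
    have := Nat.cast_sub hk (R := ℝ); push_cast at this ⊢; linarith
  rw [c1, c2]
  have hsd := sin_second_diff (N j) (m j) (k j)
  linear_combination (∏ i ∈ Finset.univ.erase j, Real.sin (π * m i * k i / N i)) * hsd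

lemma dS_esin {n : ℕ} (N : Fin n → ℕ) (h : Fin n → ℝ) (j : Fin n) (hj : h j ≠ 0)
    (m k : Fin n → ℕ) (hk : 1 ≤ k j) :
    dS h j (esin N m) k = mu1 (N j) (m j) * esin N m k := by
  simp only [dS, dLam]
  rw [esin_second_diff N m k j hk]
  field_simp [mu1]
  rw [mu1]; ring

lemma dLam_esin {n : ℕ} (N : Fin n → ℕ) (h : Fin n → ℝ) (j : Fin n)
    (m k : Fin n → ℕ) (hk : 1 ≤ k j) :
    dLam h j (esin N m) k = -(4 * s2 (N j) (m j)) / (h j)^2 * esin N m k := by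
  simp only [dLam]
  rw [esin_second_diff N m k j hk]
  ring

lemma dS_congr3 {n : ℕ} (h : Fin n → ℝ) (j : Fin n) (F G : (Fin n → ℕ) → ℝ)
    (k : Fin n → ℕ)
    (h1 : F (Function.update k j (k j + 1)) = G (Function.update k j (k j + 1)))
    (h2 : F k = G k)
    (h3 : F (Function.update k j (k j - 1)) = G (Function.update k j (k j - 1))) :
    dS h j F k = dS h j G k := by
  simp only [dS, dLam, h1, h2, h3]

lemma dLam_congr3 {n : ℕ} (h : Fin n → ℝ) (j : Fin n) (F G : (Fin n → ℕ) → ℝ)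
    (k : Fin n → ℕ)
    (h1 : F (Function.update k j (k j + 1)) = G (Function.update k j (k j + 1)))
    (h2 : F k = G k)
    (h3 : F (Function.update k j (k j - 1)) = G (Function.update k j (k j - 1))) :
    dLam h j F k = dLam h j G k := by
  simp only [dLam, h1, h2, h3]

lemma dS_sum {n : ℕ} {ι : Type*} (h : Fin n → ℝ) (j : Fin n) (F : Finset ι)
    (d : ι → ℝ) (e : ι → (Fin n → ℕ) → ℝ) (k : Fin n → ℕ) :
    dS h j (fun p => ∑ m ∈ F, d m * e m p) k = ∑ m ∈ F, d m * dS h j (e m) k := by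
  simp only [dS, dLam, mul_add]
  rw [Finset.sum_add_distrib]
  congr 1
  rw [Finset.mul_sum, ← Finset.sum_sub_distrib, ← Finset.sum_add_distrib, Finset.sum_div,
    Finset.mul_sum]
  exact Finset.sum_congr rfl fun m _ => by ring

lemma dLam_sum {n : ℕ} {ι : Type*} (h : Fin n → ℝ) (j : Fin n) (F : Finset ι)
    (d : ι → ℝ) (e : ι → (Fin n → ℕ) → ℝ) (k : Fin n → ℕ) :
    dLam h j (fun p => ∑ m ∈ F, d m * e m p) k = ∑ m ∈ F, d m * dLam h j (e m) k := by
  simp only [dLam]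
  rw [Finset.mul_sum, ← Finset.sum_sub_distrib, ← Finset.sum_add_distrib, Finset.sum_div]
  exact Finset.sum_congr rfl fun m _ => by ring

lemma foldr_key {n : ℕ} (N : Fin n → ℕ) (h : Fin n → ℝ) (hpos : ∀ i, h i ≠ 0)
    (c : (Fin n → ℕ) → ℝ) :
    ∀ (L : List (Fin n)), L.Nodup → ∀ (g : (Fin n → ℕ) → ℝ) (k : Fin n → ℕ),
      (∀ j ∈ L, 1 ≤ k j) →
      (∀ p : Fin n → ℕ, (∀ j, j ∉ L → p j = k j) → (∀ j ∈ L, p j ≤ k j + 1) →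
          g p = ∑ m ∈ interiorFinset N, c m * esin N m p) →
      ((L.map (fun i => dS h i)).foldr (fun g acc => g ∘ acc) id g) k
        = ∑ m ∈ interiorFinset N,
            (c m * ((L.map (fun j => mu1 (N j) (m j))).prod)) * esin N m k := by
  intro L
  induction L with
  | nil =>
    intro _ g k _ hg
    simp only [List.map_nil, List.foldr_nil, List.prod_nil, id]
    rw [hg k (fun _ _ => rfl) (by simp)]
    simp
  | cons j T IH =>
    intro hnd g k hk hg
    have hjT : j ∉ T := (List.nodup_cons.mp hnd).1
    have hndT := (List.nodup_cons.mp hnd).2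
    simp only [List.map_cons, List.foldr_cons]
    set F := ((T.map (fun i => dS h i)).foldr (fun g acc => g ∘ acc) id) g with hF
    set G := fun p => ∑ m ∈ interiorFinset N,
      (c m * ((T.map (fun j' => mu1 (N j') (m j'))).prod)) * esin N m p with hG
    have hIH : ∀ k' : Fin n → ℕ, (∀ j' ∈ T, 1 ≤ k' j') → (∀ j', j' ≠ j → k' j' = k j')
        → (k' j ≤ k j + 1) → F k' = G k' := by
      intro k' h1 h2 h3
      apply IH hndT g k' h1
      intro p hp1 hp2
      apply hg p
      · intro j'' hj''
        have hT : j'' ∉ T := fun hmem => hj'' (List.mem_cons_of_mem _ hmem)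
        have hne : j'' ≠ j := fun he => hj'' (he ▸ List.mem_cons_self)
        rw [hp1 j'' hT, h2 j'' hne]
      · intro j'' hj''
        rcases List.mem_cons.mp hj'' with he | hm
        · subst he
          rw [hp1 _ hjT]
          exact h3
        · have hne : j'' ≠ j := fun he => hjT (he ▸ hm)
          have := hp2 _ hm
          rwa [h2 _ hne] at this
    have hk1 : 1 ≤ k j := hk j (List.mem_cons_self)
    have hkT : ∀ j' ∈ T, 1 ≤ k j' := fun j' hj' => hk j' (List.mem_cons_of_mem _ hj')
    have hEq : (dS h j) (F) k = dS h j G k := by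
      apply dS_congr3
      · apply hIH
        · intro j' hj'
          rw [Function.update_of_ne (by rintro rfl; exact hjT hj')]
          exact hkT j' hj'
        · intro j' hne
          rw [Function.update_of_ne hne]
        · rw [Function.update_self]
      · exact hIH k hkT (fun _ _ => rfl) (Nat.le_succ _)
      · apply hIH
        · intro j' hj'
          rw [Function.update_of_ne (by rintro rfl; exact hjT hj')]
          exact hkT j' hj'
        · intro j' hne
          rw [Function.update_of_ne hne]
        · rw [Function.update_self]
          omega
    show (dS h j) (F) k = _
    rw [hEq, hG, dS_sum]
    refine Finset.sum_congr rfl fun m hm => ?_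
    rw [dS_esin N h j (hpos j) m k hk1, List.prod_cons]
    ring


lemma mem_interiorF {n : ℕ} {N : Fin n → ℕ} {m : Fin n → ℕ} :
    m ∈ interiorFinset N ↔ ∀ i, 1 ≤ m i ∧ m i ≤ N i - 1 := by
  simp [interiorFinset, Fintype.mem_piFinset, Finset.mem_Icc]

lemma esin_ortho {n : ℕ} (N : Fin n → ℕ) (hN : ∀ i, 2 ≤ N i) (m m' : Fin n → ℕ)
    (hm : m ∈ interiorFinset N) (hm' : m' ∈ interiorFinset N) :
    ∑ k ∈ interiorFinset N, esin N m k * esin N m' k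
      = if m = m' then ∏ i, (N i : ℝ)/2 else 0 := by
  rw [mem_interiorF] at hm hm'
  have step1 : ∑ k ∈ interiorFinset N, esin N m k * esin N m' k
      = ∑ k ∈ Fintype.piFinset (fun i => Finset.Icc 1 (N i - 1)),
          ∏ i, (Real.sin (π * m i * k i / N i) * Real.sin (π * m' i * k i / N i)) := by
    refine Finset.sum_congr rfl fun k _ => ?_
    rw [esin, esin, ← Finset.prod_mul_distrib]
  have key := Finset.prod_univ_sum (fun i => Finset.Icc 1 (N i - 1))
    (fun i x => Real.sin (π * m i * x / N i) * Real.sin (π * m' i * x / N i))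
  refine step1.trans (key.symm.trans ?_)
  have step2 : ∀ i : Fin n, ∑ x ∈ Finset.Icc 1 (N i - 1),
      Real.sin (π * m i * x / N i) * Real.sin (π * m' i * x / N i)
      = if m i = m' i then (N i : ℝ)/2 else 0 := fun i =>
    sin_ortho (N i) (m i) (m' i) (hN i) (hm i).1 (hm i).2 (hm' i).1 (hm' i).2
  simp only [step2]
  by_cases he : m = m'
  · subst he
    simp
  · rw [if_neg he]
    obtain ⟨i, hi⟩ : ∃ i, m i ≠ m' i := by
      by_contra hc
      push_neg at hc
      exact he (funext hc)
    exact Finset.prod_eq_zero (Finset.mem_univ i) (if_neg hi)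

lemma esin_ortho_dual {n : ℕ} (N : Fin n → ℕ) (hN : ∀ i, 2 ≤ N i) (k k' : Fin n → ℕ)
    (hk : k ∈ interiorFinset N) (hk' : k' ∈ interiorFinset N) :
    ∑ m ∈ interiorFinset N, esin N m k * esin N m k'
      = if k = k' then ∏ i, (N i : ℝ)/2 else 0 := by
  rw [mem_interiorF] at hk hk'
  have step1 : ∑ m ∈ interiorFinset N, esin N m k * esin N m k'
      = ∑ m ∈ Fintype.piFinset (fun i => Finset.Icc 1 (N i - 1)),
          ∏ i, (Real.sin (π * k i * m i / N i) * Real.sin (π * k' i * m i / N i)) := by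
    refine Finset.sum_congr rfl fun m _ => ?_
    rw [esin, esin, ← Finset.prod_mul_distrib]
    refine Finset.prod_congr rfl fun i _ => ?_
    rw [show π * (m i:ℝ) * (k i) / (N i) = π * (k i:ℝ) * (m i) / (N i) from by ring,
      show π * (m i:ℝ) * (k' i) / (N i) = π * (k' i:ℝ) * (m i) / (N i) from by ring]
  have key := Finset.prod_univ_sum (fun i => Finset.Icc 1 (N i - 1))
    (fun i x => Real.sin (π * k i * x / N i) * Real.sin (π * k' i * x / N i))
  refine step1.trans (key.symm.trans ?_)
  have step2 : ∀ i : Fin n, ∑ x ∈ Finset.Icc 1 (N i - 1),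
      Real.sin (π * k i * x / N i) * Real.sin (π * k' i * x / N i)
      = if k i = k' i then (N i : ℝ)/2 else 0 := fun i =>
    sin_ortho (N i) (k i) (k' i) (hN i) (hk i).1 (hk i).2 (hk' i).1 (hk' i).2
  simp only [step2]
  by_cases he : k = k'
  · subst he
    simp
  · rw [if_neg he]
    obtain ⟨i, hi⟩ : ∃ i, k i ≠ k' i := by
      by_contra hc
      push_neg at hc
      exact he (funext hc)
    exact Finset.prod_eq_zero (Finset.mem_univ i) (if_neg hi)

noncomputable def coeff {n : ℕ} (N : Fin n → ℕ) (w : (Fin n → ℕ) → ℝ)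
    (m : Fin n → ℕ) : ℝ :=
  (∏ i, 2/(N i : ℝ)) * ∑ k ∈ interiorFinset N, w k * esin N m k

lemma esin_vanish {n : ℕ} (N : Fin n → ℕ) (hN : ∀ i, 2 ≤ N i) (m p : Fin n → ℕ)
    (j : Fin n) (hp : p j = 0 ∨ p j = N j) : esin N m p = 0 := by
  apply Finset.prod_eq_zero (Finset.mem_univ j)
  rcases hp with h0 | hNj
  · rw [h0]
    simp
  · rw [hNj]
    have hNj0 : (N j : ℝ) ≠ 0 := by
      have := hN j; positivity
    rw [show π * (m j:ℝ) * (N j) / (N j) = (m j : ℝ) * π from by field_simp]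
    exact Real.sin_nat_mul_pi (m j)

lemma expansion {n : ℕ} (N : Fin n → ℕ) (hN : ∀ i, 2 ≤ N i)
    (w : (Fin n → ℕ) → ℝ)
    (hw : ∀ k, ¬ (∀ i, 1 ≤ k i ∧ k i ≤ N i - 1) → w k = 0)
    (p : Fin n → ℕ) (hp : ∀ j, p j ≤ N j) :
    w p = ∑ m ∈ interiorFinset N, coeff N w m * esin N m p := by
  by_cases hpint : ∀ i, 1 ≤ p i ∧ p i ≤ N i - 1
  · have hpmem : p ∈ interiorFinset N := mem_interiorF.mpr hpint
    rw [eq_comm]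
    calc ∑ m ∈ interiorFinset N, coeff N w m * esin N m p
        = ∑ m ∈ interiorFinset N, ∑ k ∈ interiorFinset N,
            w k * ((∏ i, 2/(N i : ℝ)) * (esin N m k * esin N m p)) := by
          refine Finset.sum_congr rfl fun m _ => ?_
          rw [coeff, mul_assoc, Finset.sum_mul, Finset.mul_sum]
          exact Finset.sum_congr rfl fun k _ => by ring
      _ = ∑ k ∈ interiorFinset N, ∑ m ∈ interiorFinset N,
            w k * ((∏ i, 2/(N i : ℝ)) * (esin N m k * esin N m p)) := Finset.sum_comm
      _ = ∑ k ∈ interiorFinset N,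
            w k * ((∏ i, 2/(N i : ℝ)) * ∑ m ∈ interiorFinset N, esin N m k * esin N m p) := by
          refine Finset.sum_congr rfl fun k _ => ?_
          rw [Finset.mul_sum, Finset.mul_sum]
      _ = ∑ k ∈ interiorFinset N, w k * (if k = p then 1 else 0) := by
          refine Finset.sum_congr rfl fun k hk => ?_
          rw [esin_ortho_dual N hN k p hk hpmem]
          by_cases he : k = p
          · rw [if_pos he, if_pos he, ← Finset.prod_mul_distrib]
            rw [Finset.prod_congr rfl (fun i _ => show 2/(N i:ℝ) * ((N i:ℝ)/2) = 1 from by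
              have h0 : (N i : ℝ) ≠ 0 := by have := hN i; positivity
              field_simp)]
            simp
          · rw [if_neg he, if_neg he, mul_zero]
      _ = w p := by
          rw [Finset.sum_congr rfl (fun k _ => show w k * (if k = p then 1 else 0)
              = if k = p then w k else 0 from by split <;> simp)]
          rw [Finset.sum_ite_eq' (interiorFinset N) p w]
          rw [if_pos hpmem]
  · rw [hw p hpint]
    push_neg at hpint
    obtain ⟨j, hj⟩ := hpint
    have hj0 : p j = 0 ∨ p j = N j := by
      have := hp j
      have := hN j
      omega
    rw [eq_comm, Finset.sum_eq_zero]
    intro m _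
    rw [esin_vanish N hN m p j hj0, mul_zero]


lemma angle_bounds (M c : ℕ) (hM : 2 ≤ M) (hc : 1 ≤ c) (hc' : c ≤ M - 1) :
    0 < π * c / (2*M) ∧ π * c / (2*M) < π/2 := by
  have hM0 : (0:ℝ) < M := by exact_mod_cast (by omega : 0 < M)
  have hπ := Real.pi_pos
  have hc0 : (0:ℝ) < c := by exact_mod_cast hc
  have hcM : (c:ℝ) < M := by exact_mod_cast (by omega : c < M)
  constructor
  · positivity
  · rw [div_lt_div_iff₀ (by positivity) (by norm_num)]
    nlinarith

lemma s2_pos (M c : ℕ) (hM : 2 ≤ M) (hc : 1 ≤ c) (hc' : c ≤ M - 1) : 0 < s2 M c := by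
  obtain ⟨h1, h2⟩ := angle_bounds M c hM hc hc'
  have hπ := Real.pi_pos
  have hs := Real.sin_pos_of_pos_of_lt_pi h1 (by linarith)
  rw [s2]
  positivity

lemma s2_lt_one (M c : ℕ) (hM : 2 ≤ M) (hc : 1 ≤ c) (hc' : c ≤ M - 1) : s2 M c < 1 := by
  obtain ⟨h1, h2⟩ := angle_bounds M c hM hc hc'
  have hπ := Real.pi_pos
  have hcos := Real.cos_pos_of_mem_Ioo (x := π * c / (2*M)) ⟨by linarith, h2⟩
  have hpy := Real.sin_sq_add_cos_sq (π * c / (2*M))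
  rw [s2]
  nlinarith

lemma s2_le_max (M c : ℕ) (hM : 2 ≤ M) (hc : 1 ≤ c) (hc' : c ≤ M - 1) :
    s2 M c ≤ s2 M (M-1) := by
  obtain ⟨h1, h2⟩ := angle_bounds M c hM hc hc'
  obtain ⟨g1, g2⟩ := angle_bounds M (M-1) hM (by omega) le_rfl
  have harg : π * (c:ℝ) / (2*M) ≤ π * ((M-1:ℕ):ℝ) / (2*M) := by
    have hM0 : (0:ℝ) < M := by exact_mod_cast (by omega : 0 < M)
    have hπ := Real.pi_pos
    have : (c:ℝ) ≤ ((M-1:ℕ):ℝ) := by exact_mod_cast hc'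
    gcongr
  have hsin : Real.sin (π * c / (2*M)) ≤ Real.sin (π * ((M-1:ℕ):ℝ) / (2*M)) := by
    apply Real.sin_le_sin_of_le_of_le_pi_div_two (by linarith) (le_of_lt g2) harg
  have hs1 : 0 ≤ Real.sin (π * c / (2*M)) :=
    Real.sin_nonneg_of_nonneg_of_le_pi (le_of_lt h1) (by have := Real.pi_pos; linarith)
  rw [s2, s2]
  nlinarith

lemma mu1_bounds (M c : ℕ) (hM : 2 ≤ M) (hc : 1 ≤ c) (hc' : c ≤ M - 1) :
    2/3 < mu1 M c ∧ mu1 M c ≤ 1 := by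
  have h1 := s2_pos M c hM hc hc'
  have h2 := s2_lt_one M c hM hc hc'
  rw [mu1]
  constructor <;> nlinarith

lemma inner_diag {n : ℕ} (N : Fin n → ℕ) (hN : ∀ i, 2 ≤ N i)
    (d c : (Fin n → ℕ) → ℝ) :
    ∑ k ∈ interiorFinset N,
        (∑ m ∈ interiorFinset N, d m * esin N m k) * (∑ m ∈ interiorFinset N, c m * esin N m k)
      = (∏ i, (N i : ℝ)/2) * ∑ m ∈ interiorFinset N, d m * c m := by
  have step1 : ∀ k, (∑ m ∈ interiorFinset N, d m * esin N m k) * (∑ m ∈ interiorFinset N, c m * esin N m k)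
      = ∑ m ∈ interiorFinset N, ∑ m' ∈ interiorFinset N, (d m * c m') * (esin N m k * esin N m' k) := by
    intro k
    rw [Finset.sum_mul_sum]
    exact Finset.sum_congr rfl fun m _ => Finset.sum_congr rfl fun m' _ => by ring
  simp only [step1]
  rw [Finset.sum_comm]
  have step2 : ∀ m ∈ interiorFinset N,
      (∑ k ∈ interiorFinset N, ∑ m' ∈ interiorFinset N, (d m * c m') * (esin N m k * esin N m' k))
      = (∏ i, (N i : ℝ)/2) * (d m * c m) := by
    intro m hm
    rw [Finset.sum_comm]
    have inner : ∀ m' ∈ interiorFinset N,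
        ∑ k ∈ interiorFinset N, (d m * c m') * (esin N m k * esin N m' k)
        = (d m * c m') * (if m = m' then ∏ i, (N i : ℝ)/2 else 0) := by
      intro m' hm'
      rw [← Finset.mul_sum, esin_ortho N hN m m' hm hm']
    rw [Finset.sum_congr rfl inner]
    have : ∀ m' ∈ interiorFinset N, (d m * c m') * (if m = m' then ∏ i, (N i : ℝ)/2 else 0)
        = if m = m' then (d m * c m') * ∏ i, (N i : ℝ)/2 else 0 := by
      intro m' _
      split <;> simp
    rw [Finset.sum_congr rfl this, Finset.sum_ite_eq (interiorFinset N) m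
      (fun m' => (d m * c m') * ∏ i, (N i : ℝ)/2), if_pos hm]
    ring
  rw [Finset.sum_congr rfl step2, ← Finset.mul_sum]

lemma prod_filter_ne {n : ℕ} (i : Fin n) (f : Fin n → ℝ) :
    (((List.finRange n).filter (fun j => j != i)).map f).prod
      = ∏ j ∈ Finset.univ.erase i, f j := by
  have hnd : ((List.finRange n).filter (fun j => j != i)).Nodup :=
    (List.nodup_finRange n).filter _
  rw [← List.prod_toFinset f hnd]
  congr 1
  ext j
  simp [List.mem_filter, List.mem_finRange, Finset.mem_erase, bne_iff_ne]

lemma prod_all_split {n : ℕ} (i : Fin n) (f : Fin n → ℝ) :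
    ((List.finRange n).map f).prod = f i * (((List.finRange n).filter (fun j => j != i)).map f).prod := by
  rw [prod_filter_ne, ← Fin.prod_univ_def, ← Finset.mul_prod_erase _ _ (Finset.mem_univ i)]

lemma main_lt {n : ℕ} (hn : 1 ≤ n) (a : Fin n → ℝ) (N : Fin n → ℕ)
    (ha : ∀ i, 0 < a i) (hN : ∀ i, 2 ≤ N i) (h : Fin n → ℝ) (hpos : ∀ i, 0 < h i)
    (w : (Fin n → ℕ) → ℝ) (hw : ∀ k, ¬ (∀ i, 1 ≤ k i ∧ k i ≤ N i - 1) → w k = 0)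
    (hw0 : w ≠ 0) :
    dInner N h (dAbar a h w) w
      < (3/2) * (∑ i, (a i)^2 * (4 / (h i)^2 * Real.sin (π * ((N i : ℝ) - 1) / (2 * N i))^2))
        * dInner N h (dSbar h w) w := by
  have hne : ∀ i, h i ≠ 0 := fun i => (hpos i).ne'
  set c : (Fin n → ℕ) → ℝ := coeff N w with hc
  have hexp : ∀ p : Fin n → ℕ, (∀ j, p j ≤ N j) →
      w p = ∑ m ∈ interiorFinset N, c m * esin N m p := fun p hp =>
    expansion N hN w hw p hp
  set Pall : (Fin n → ℕ) → ℝ :=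
    fun m => ((List.finRange n).map (fun j => mu1 (N j) (m j))).prod with hPall
  set Phat : Fin n → (Fin n → ℕ) → ℝ :=
    fun i m => (((List.finRange n).filter (fun j => j != i)).map
      (fun j => mu1 (N j) (m j))).prod with hPhat
  set A : (Fin n → ℕ) → ℝ :=
    fun m => ∑ i, (a i)^2 * (4 * s2 (N i) (m i) / (h i)^2) * Phat i m with hA
  set C0 : ℝ := (3/2) * (∑ i, (a i)^2
    * (4 / (h i)^2 * Real.sin (π * ((N i : ℝ) - 1) / (2 * N i))^2)) with hC0
  -- s2max cast
  have hs2max : ∀ i, Real.sin (π * ((N i : ℝ) - 1) / (2 * N i))^2 = s2 (N i) (N i - 1) := by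
    intro i
    rw [s2]
    congr 3
    have : ((N i - 1 : ℕ) : ℝ) = (N i : ℝ) - 1 := by
      have := hN i
      push_cast [Nat.cast_sub (by omega : 1 ≤ N i)]
      ring
    rw [this]
  -- dSbar expansion
  have hSbar : ∀ k ∈ interiorFinset N,
      dSbar h w k = ∑ m ∈ interiorFinset N, (c m * Pall m) * esin N m k := by
    intro k hk
    rw [mem_interiorF] at hk
    exact foldr_key N h hne c (List.finRange n) (List.nodup_finRange n) w k
      (fun j _ => (hk j).1)
      (fun p _ hp2 => hexp p (fun j => by
        have := hp2 j (List.mem_finRange j)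
        have := (hk j).2
        have := hN j
        omega))
  -- dSbarHat ∘ dLam expansion
  have hHat : ∀ (i : Fin n), ∀ k ∈ interiorFinset N,
      dSbarHat h i (dLam h i w) k
        = ∑ m ∈ interiorFinset N,
            (c m * (-(4 * s2 (N i) (m i)) / (h i)^2 * Phat i m)) * esin N m k := by
    intro i k hk
    rw [mem_interiorF] at hk
    have hmemL : ∀ j : Fin n, (j ∈ (List.finRange n).filter (fun j => j != i)) ↔ j ≠ i := by
      intro j
      simp [List.mem_filter, List.mem_finRange, bne_iff_ne]
    have key := foldr_key N h hne
      (fun m => c m * (-(4 * s2 (N i) (m i)) / (h i)^2))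
      ((List.finRange n).filter (fun j => j != i))
      ((List.nodup_finRange n).filter _)
      (dLam h i w) k
      (fun j hj => (hk j).1)
      ?hg
    · rw [dSbarHat, key]
      exact Finset.sum_congr rfl fun m _ => by ring
    · intro p hp1 hp2
      have hpi : p i = k i := hp1 i (by rw [hmemL]; simp)
      have hpbox : ∀ j, p j ≤ N j := by
        intro j
        by_cases hji : j = i
        · subst hji
          rw [hpi]
          have := (hk j).2
          have := hN j
          omega
        · have := hp2 j ((hmemL j).mpr hji)
          have := (hk j).2
          have := hN j
          omega
      have hpi1 : 1 ≤ p i := by rw [hpi]; exact (hk i).1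
      have hcong : dLam h i w p = dLam h i (fun q => ∑ m ∈ interiorFinset N, c m * esin N m q) p := by
        apply dLam_congr3
        · apply hexp
          intro j
          by_cases hji : j = i
          · subst hji
            rw [Function.update_self]
            have := (hk j).2
            have := hN j
            omega
          · rw [Function.update_of_ne hji]
            exact hpbox j
        · exact hexp p hpbox
        · apply hexp
          intro j
          by_cases hji : j = i
          · subst hji
            rw [Function.update_self]
            have := hpbox j
            omega
          · rw [Function.update_of_ne hji]
            exact hpbox j
      rw [hcong, dLam_sum]
      refine Finset.sum_congr rfl fun m _ => ?_
      rw [dLam_esin N h i m p hpi1]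
      ring
  -- dAbar expansion
  have hAbar : ∀ k ∈ interiorFinset N,
      dAbar a h w k = ∑ m ∈ interiorFinset N, (c m * A m) * esin N m k := by
    intro k hk
    rw [dAbar]
    rw [Finset.sum_congr rfl (fun i _ => by rw [hHat i k hk])]
    rw [← Finset.sum_neg_distrib]
    rw [Finset.sum_congr rfl (fun i (_ : i ∈ Finset.univ) => by
      rw [Finset.mul_sum, ← Finset.sum_neg_distrib])]
    rw [Finset.sum_comm]
    refine Finset.sum_congr rfl fun m hm => ?_
    simp only [hA]
    rw [Finset.mul_sum, Finset.sum_mul]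
    exact Finset.sum_congr rfl fun x _ => by ring
  -- inner products
  have hwk : ∀ k ∈ interiorFinset N, w k = ∑ m ∈ interiorFinset N, c m * esin N m k := by
    intro k hk
    rw [mem_interiorF] at hk
    refine hexp k (fun j => ?_)
    have := (hk j).2
    have := hN j
    omega
  have hIA : dInner N h (dAbar a h w) w
      = (∏ i, h i) * ((∏ i, (N i:ℝ)/2) * ∑ m ∈ interiorFinset N, (c m * A m) * c m) := by
    rw [dInner]
    congr 1
    rw [Finset.sum_congr rfl (fun k hk => by rw [hAbar k hk, hwk k hk])]
    exact inner_diag N hN (fun m => c m * A m) c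
  have hIS : dInner N h (dSbar h w) w
      = (∏ i, h i) * ((∏ i, (N i:ℝ)/2) * ∑ m ∈ interiorFinset N, (c m * Pall m) * c m) := by
    rw [dInner]
    congr 1
    rw [Finset.sum_congr rfl (fun k hk => by rw [hSbar k hk, hwk k hk])]
    exact inner_diag N hN (fun m => c m * Pall m) c
  have hPpos : (0:ℝ) < ∏ i, (N i:ℝ)/2 :=
    Finset.prod_pos (fun i _ => by have := hN i; have : (2:ℝ) ≤ (N i:ℝ) := by exact_mod_cast this
                                   positivity)
  have hHpos : (0:ℝ) < ∏ i, h i := Finset.prod_pos (fun i _ => hpos i)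
  -- per mode strict inequality
  have hmode : ∀ m ∈ interiorFinset N, A m < C0 * Pall m := by
    intro m hm
    rw [mem_interiorF] at hm
    have hmu : ∀ j, 2/3 < mu1 (N j) (m j) ∧ mu1 (N j) (m j) ≤ 1 :=
      fun j => mu1_bounds _ _ (hN j) (hm j).1 (hm j).2
    have hPhatpos : ∀ i, 0 < Phat i m := by
      intro i
      rw [show Phat i m = ∏ j ∈ Finset.univ.erase i, mu1 (N j) (m j) from
        prod_filter_ne i _]
      exact Finset.prod_pos fun j _ => lt_trans (by norm_num) (hmu j).1
    have hsplit : ∀ i, Pall m = mu1 (N i) (m i) * Phat i m := fun i => prod_all_split i _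
    have hrhs : C0 * Pall m
        = ∑ i, 3/2 * ((a i)^2 * (4/(h i)^2 * s2 (N i) (N i - 1))) * Pall m := by
      rw [hC0]
      simp only [hs2max]
      rw [Finset.mul_sum, Finset.sum_mul]
    rw [hrhs]
    simp only [hA]
    haveI : Nonempty (Fin n) := ⟨⟨0, hn⟩⟩
    apply Finset.sum_lt_sum_of_nonempty Finset.univ_nonempty
    intro i _
    have h1 := s2_pos (N i) (m i) (hN i) (hm i).1 (hm i).2
    have h2 := s2_lt_one (N i) (m i) (hN i) (hm i).1 (hm i).2
    have h3 := s2_le_max (N i) (m i) (hN i) (hm i).1 (hm i).2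
    rw [hsplit i]
    have hai := ha i
    have hhi := hpos i
    have hcoefpos : 0 < (a i)^2 * (4/(h i)^2) * Phat i m :=
      mul_pos (by positivity) (hPhatpos i)
    have hkey : s2 (N i) (m i) < 3/2 * mu1 (N i) (m i) * s2 (N i) (N i - 1) := by
      rw [mu1]
      nlinarith
    calc (a i)^2 * (4 * s2 (N i) (m i) / (h i)^2) * Phat i m
        = ((a i)^2 * (4/(h i)^2) * Phat i m) * s2 (N i) (m i) := by ring
      _ < ((a i)^2 * (4/(h i)^2) * Phat i m)
            * (3/2 * mu1 (N i) (m i) * s2 (N i) (N i - 1)) :=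
          mul_lt_mul_of_pos_left hkey hcoefpos
      _ = 3/2 * ((a i)^2 * (4 / (h i)^2 * s2 (N i) (N i - 1)))
            * (mu1 (N i) (m i) * Phat i m) := by ring
  -- existence of a nonzero coefficient
  have hm0 : ∃ m ∈ interiorFinset N, c m ≠ 0 := by
    by_contra hall
    push_neg at hall
    apply hw0
    funext k
    show w k = 0
    by_cases hbox : ∀ j, k j ≤ N j
    · rw [hexp k hbox]
      exact Finset.sum_eq_zero (fun m hm => by rw [hall m hm, zero_mul])
    · push_neg at hbox
      obtain ⟨j, hj⟩ := hbox
      refine hw k (fun hc => ?_)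
      have := (hc j).2
      omega
  obtain ⟨m0, hm0mem, hm0ne⟩ := hm0
  have hsum : ∑ m ∈ interiorFinset N, (c m * A m) * c m
      < C0 * ∑ m ∈ interiorFinset N, (c m * Pall m) * c m := by
    rw [Finset.mul_sum]
    apply Finset.sum_lt_sum
    · intro m hm
      have := hmode m hm
      nlinarith [sq_nonneg (c m)]
    · refine ⟨m0, hm0mem, ?_⟩
      have := hmode m0 hm0mem
      have hc2 : 0 < c m0 ^ 2 := by positivity
      nlinarith
  calc dInner N h (dAbar a h w) w
      = ((∏ i, h i) * (∏ i, (N i:ℝ)/2)) * ∑ m ∈ interiorFinset N, (c m * A m) * c m := by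
        rw [hIA]; ring
    _ < ((∏ i, h i) * (∏ i, (N i:ℝ)/2))
          * (C0 * ∑ m ∈ interiorFinset N, (c m * Pall m) * c m) :=
        mul_lt_mul_of_pos_left hsum (by positivity)
    _ = C0 * dInner N h (dSbar h w) w := by
        rw [hIS]; ring

theorem stmt_11 (n : ℕ) (hn : 1 ≤ n) (a X : Fin n → ℝ) (N : Fin n → ℕ)
    (ha : ∀ i, 0 < a i) (hX : ∀ i, 0 < X i) (hN : ∀ i, 2 ≤ N i)
    (h : Fin n → ℝ) (hh : ∀ i, h i = X i / N i) :
    (∀ w : (Fin n → ℕ) → ℝ, (∀ k, ¬ interiorNode N k → w k = 0) → w ≠ 0 →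
      dInner N h (dAbar a h w) w
        < (3/2) * (∑ i, (a i)^2 * (4 / (h i)^2 * Real.sin (π * ((N i : ℝ) - 1) / (2 * N i))^2))
          * dInner N h (dSbar h w) w) ∧
    (∃ c : ℝ, c < 6 * ∑ i, (a i)^2 / (h i)^2 ∧
      ∀ w : (Fin n → ℕ) → ℝ, (∀ k, ¬ interiorNode N k → w k = 0) →
        dInner N h (dAbar a h w) w ≤ c * dInner N h (dSbar h w) w) := by
  have hpos : ∀ i, 0 < h i := by
    intro i
    rw [hh i]
    have h2 := hN i
    have hNr : (0:ℝ) < N i := by exact_mod_cast (by omega : 0 < N i)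
    exact div_pos (hX i) hNr
  constructor
  · intro w hw hw0
    exact main_lt hn a N ha hN h hpos w hw hw0
  · refine ⟨(3/2) * (∑ i, (a i)^2
      * (4 / (h i)^2 * Real.sin (π * ((N i : ℝ) - 1) / (2 * N i))^2)), ?_, ?_⟩
    · rw [Finset.mul_sum, Finset.mul_sum]
      haveI : Nonempty (Fin n) := ⟨⟨0, hn⟩⟩
      apply Finset.sum_lt_sum_of_nonempty Finset.univ_nonempty
      intro i _
      have hs2m : Real.sin (π * ((N i : ℝ) - 1) / (2 * N i))^2 = s2 (N i) (N i - 1) := by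
        rw [s2]
        congr 3
        have hcast : ((N i - 1 : ℕ) : ℝ) = (N i : ℝ) - 1 := by
          have := hN i
          push_cast [Nat.cast_sub (by omega : 1 ≤ N i)]
          ring
        rw [hcast]
      rw [hs2m]
      have h2 := s2_lt_one (N i) (N i - 1) (hN i) (by have := hN i; omega) le_rfl
      have h1 := s2_pos (N i) (N i - 1) (hN i) (by have := hN i; omega) le_rfl
      have h4 : 0 < (a i)^2 / (h i)^2 := by
        have := ha i
        have := hpos i
        positivity
      have key : 3/2*((a i)^2*(4/(h i)^2 * s2 (N i) (N i - 1)))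
          = 6*((a i)^2/(h i)^2) * s2 (N i) (N i - 1) := by ring
      rw [key]
      exact mul_lt_of_lt_one_right (by positivity) h2
    · intro w hw
      rcases eq_or_ne w 0 with rfl | hne
      · simp [dInner]
      · exact le_of_lt (main_lt hn a N ha hN h hpos w hw hne)
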